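/- arXiv:2504.20297 — 2 statements merged into one kernel-verified Lean document; each statement's English description precedes it below -/
import Mathlib

section
/- Let A₁ be the 2-dimensional complex pre-Lie algebra with e₁·e₁ = e₁ + e₂, e₂·e₁ = e₂ (other products zero). For every N₂₁ ∈ ℂ, the linear map P with P(e₁) = N₂₁e₂, P(e₂) = 0 is a Nijenhuis operator on A₁. -/
noncomputable section

abbrev V : Type := ℂ × ℂ

def mul : V → V → V := fun x y => (x.1*y.1, x.1*y.1 + x.2*y.1)

def e1 : V := (1, 0)
def e2 : V := (0, 1)

theorem stmt12 (N21 : ℂ) (P : V →ₗ[ℂ] V)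
    (h1 : P e1 = N21 • e2) (h2 : P e2 = 0) :
    ∀ x y : V, mul (P x) (P y) = P (mul (P x) y + mul x (P y) - P (mul x y)) := by
  have key : ∀ v : V, P v = (v.1 * N21) • e2 := by
    intro v
    have hv : v = v.1 • e1 + v.2 • e2 := by
      simp [e1, e2, Prod.ext_iff]
    rw [hv, map_add, map_smul, map_smul, h1, h2, smul_zero, add_zero, smul_smul]
    simp [e1, e2]
  intro x y
  rw [key x, key y, key (mul x y), key]
  simp [mul, e2]
end
end

section
/- Let A₁ be the 2-dimensional complex pre-Lie algebra with e₁·e₁ = e₁ + e₂, e₂·e₁ = e₂ (other products zero). For every c ∈ ℂ, the scalar map P = c·id (P(e₁) = ce₁, P(e₂) = ce₂) is an averaging operator on A₁, and for every d ∈ ℂ, the map Q with Q(e₁) = de₂, Q(e₂) = 0 is also an averaging operator on A₁. -/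
noncomputable section

lemma decomp (x : V) : x = x.1 • e1 + x.2 • e2 := by
  simp [e1, e2, Prod.ext_iff]

theorem stmt16 :
    (∀ (c : ℂ) (P : V →ₗ[ℂ] V), P e1 = c • e1 → P e2 = c • e2 →
      ∀ x y : V, mul (P x) (P y) = P (mul x (P y)) ∧ mul (P x) (P y) = P (mul (P x) y)) ∧
    (∀ (d : ℂ) (Q : V →ₗ[ℂ] V), Q e1 = d • e2 → Q e2 = 0 →
      ∀ x y : V, mul (Q x) (Q y) = Q (mul x (Q y)) ∧ mul (Q x) (Q y) = Q (mul (Q x) y)) := by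
  constructor
  · intro c P h1 h2 x y
    have hP : ∀ z : V, P z = (c * z.1, c * z.2) := by
      intro z
      rw [decomp z, map_add, map_smul, map_smul, h1, h2]
      simp [e1, e2, Prod.ext_iff, mul_comm]
    simp [mul, hP, Prod.ext_iff]
    ring_nf
    tauto
  · intro d Q h1 h2 x y
    have hQ : ∀ z : V, Q z = (0, d * z.1) := by
      intro z
      rw [decomp z, map_add, map_smul, map_smul, h1, h2]
      simp [e1, e2, Prod.ext_iff, mul_comm]
    simp [mul, hQ, Prod.ext_iff]
end
end
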